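/- arXiv:1310.7995 — 3 statements merged into one kernel-verified Lean document; each statement's English description precedes it below -/
import Mathlib

section
/- If F is a subexponential distribution on (0,∞), then for every ε > 0 there exists a constant C_ε > 0 such that for all n ≥ 1 and all x ≥ 0, the tail of the n-fold convolution satisfies 1 - F^{*n}(x) ≤ C_ε (1+ε)^n (1 - F(x)). -/
open MeasureTheory Filter ProbabilityTheory

/-- The tail `1 - F(x)` of a distribution `μ` on `ℝ`. -/
noncomputable def mtail (μ : Measure ℝ) (x : ℝ) : ℝ := (μ (Set.Ioi x)).toReal

/-- The `n`-fold convolution `F^{*n}` of `μ`: the law of the sum of `n` i.i.d. copies. -/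
noncomputable def convn (μ : Measure ℝ) (n : ℕ) : Measure ℝ :=
  (Measure.pi (fun _ : Fin n => μ)).map (fun f => ∑ i, f i)

/-- `μ` is subexponential: positive tail and `(1 - F^{*2}(x))/(1 - F(x)) → 2`. -/
def Subexp (μ : Measure ℝ) : Prop :=
  (∀ x, 0 < mtail μ x) ∧
  Tendsto (fun x => mtail (convn μ 2) x / mtail μ x) atTop (nhds 2)

/-!
Write `Ḡ(x) = G(x, ∞)` for the tail of a distribution `G`. Splitting the first summand off the
sum of `n + 1` copies gives
`F̄^{*(n+1)}(x) = ∫_{y ≤ x} F̄^{*n}(x - y) dF(y) + ∫_{y > x} F̄^{*n}(x - y) dF(y)`,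
and the second integral is at most `F̄(x)`. For `n = 1` it equals `F̄(x)` because `F` lives on
`(0, ∞)`, so subexponentiality gives `∫_{y ≤ x} F̄(x - y) dF(y) ≤ (1 + ε) F̄(x)` for `x ≥ T`.
Hence, if `F̄^{*n} ≤ α F̄` on `[0, ∞)`, then `F̄^{*(n+1)}(x) ≤ ((1 + ε) α + 1) F̄(x)` for `x ≥ T`,
while `F̄^{*(n+1)}(x) ≤ 1 ≤ F̄(x) / F̄(T)` for `x < T`. Starting from `F^{*0} = δ₀`, the constants
`α_n = D ∑_{k<n} (1 + ε)^k` with `D = 1 + 1 / F̄(T)` work, and `α_n ≤ (D / ε) (1 + ε)^n`.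
-/

open Set
open scoped ENNReal

lemma measurable_sum_fin (n : ℕ) : Measurable fun f : Fin n → ℝ => ∑ i, f i := by
  fun_prop

instance (μ : Measure ℝ) [IsProbabilityMeasure μ] (n : ℕ) :
    IsProbabilityMeasure (convn μ n) :=
  Measure.isProbabilityMeasure_map (measurable_sum_fin n).aemeasurable

lemma convn_zero (μ : Measure ℝ) : convn μ 0 = Measure.dirac 0 := by
  rw [convn, Measure.pi_of_empty]
  exact (Measure.map_dirac' (measurable_sum_fin 0) _).trans (by simp)

lemma convn_one (μ : Measure ℝ) : convn μ 1 = μ := by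
  have hsum : (fun f : Fin 1 → ℝ => ∑ i, f i) = MeasurableEquiv.funUnique (Fin 1) ℝ := by
    funext f
    simp [MeasurableEquiv.funUnique]
  rw [convn, hsum]
  exact (measurePreserving_funUnique μ (Fin 1)).map_eq

lemma convn_succ_apply_Ioi (μ : Measure ℝ) [SigmaFinite μ] (n : ℕ) (x : ℝ) :
    convn μ (n + 1) (Ioi x) = ∫⁻ y, convn μ n (Ioi (x - y)) ∂μ := by
  set e := MeasurableEquiv.piFinSuccAbove (fun _ : Fin (n + 1) => ℝ) 0
  have hpre : (fun f : Fin (n + 1) → ℝ => ∑ i, f i) ⁻¹' Ioi x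
      = e ⁻¹' {p : ℝ × (Fin n → ℝ) | x < p.1 + ∑ j, p.2 j} := by
    ext f
    simp [e, Fin.sum_univ_succ, Fin.tail]
  have hmeas : MeasurableSet {p : ℝ × (Fin n → ℝ) | x < p.1 + ∑ j, p.2 j} :=
    measurableSet_lt measurable_const (by fun_prop)
  rw [convn, Measure.map_apply (measurable_sum_fin _) measurableSet_Ioi, hpre,
    ← e.map_apply, (measurePreserving_piFinSuccAbove (fun _ => μ) 0).map_eq,
    Measure.prod_apply hmeas]
  refine lintegral_congr fun y => ?_
  rw [convn, Measure.map_apply (measurable_sum_fin n) measurableSet_Ioi]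
  congr 1
  ext g
  simp [sub_lt_iff_lt_add']

lemma measurable_measure_Ioi_sub (ν : Measure ℝ) (x : ℝ) :
    Measurable fun y => ν (Ioi (x - y)) :=
  Monotone.measurable fun _ _ hab => measure_mono (Ioi_subset_Ioi (by linarith))

lemma measure_Ioi_le_ofReal_mul_iff (ν μ : Measure ℝ) [IsFiniteMeasure ν] [IsFiniteMeasure μ]
    {c : ℝ} (hc : 0 ≤ c) (x : ℝ) :
    ν (Ioi x) ≤ ENNReal.ofReal c * μ (Ioi x) ↔ mtail ν x ≤ c * mtail μ x := by
  rw [mtail, mtail, ← ENNReal.toReal_ofReal hc, ← ENNReal.toReal_mul,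
    ENNReal.toReal_le_toReal (measure_ne_top _ _)
      (ENNReal.mul_ne_top ENNReal.ofReal_ne_top (measure_ne_top _ _)), ENNReal.ofReal_toReal]
  exact ENNReal.ofReal_ne_top

section ProbabilityOnPositives

variable {μ : Measure ℝ} [IsProbabilityMeasure μ]

lemma measure_Ioi_of_nonpos (hpos : μ (Iic 0) = 0) {z : ℝ} (hz : z ≤ 0) : μ (Ioi z) = 1 := by
  have hIoi : μ (Ioi 0) = 1 := by
    rw [← compl_Iic, prob_compl_eq_one_iff measurableSet_Iic]
    exact hpos
  exact le_antisymm prob_le_one (hIoi ▸ measure_mono (Ioi_subset_Ioi hz))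

lemma convn_two_apply_Ioi (hpos : μ (Iic 0) = 0) (x : ℝ) :
    convn μ 2 (Ioi x) = ∫⁻ y in Iic x, μ (Ioi (x - y)) ∂μ + μ (Ioi x) := by
  rw [convn_succ_apply_Ioi, convn_one, ← lintegral_add_compl _ measurableSet_Iic, compl_Iic,
    setLIntegral_congr_fun measurableSet_Ioi
      fun y hy => measure_Ioi_of_nonpos hpos (sub_nonpos.2 (le_of_lt hy)),
    setLIntegral_one]

lemma lintegral_Iic_measure_Ioi_sub_le (hpos : μ (Iic 0) = 0) {x : ℝ} {a : ℝ≥0∞}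
    (h : convn μ 2 (Ioi x) ≤ (a + 1) * μ (Ioi x)) :
    ∫⁻ y in Iic x, μ (Ioi (x - y)) ∂μ ≤ a * μ (Ioi x) := by
  rw [convn_two_apply_Ioi hpos, add_mul, one_mul] at h
  exact (ENNReal.add_le_add_iff_right (measure_ne_top _ _)).1 h

lemma convn_succ_apply_Ioi_le {n : ℕ} {x : ℝ} {a b : ℝ≥0∞}
    (ha : ∫⁻ y in Iic x, μ (Ioi (x - y)) ∂μ ≤ a * μ (Ioi x))
    (hb : ∀ z, 0 ≤ z → convn μ n (Ioi z) ≤ b * μ (Ioi z)) :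
    convn μ (n + 1) (Ioi x) ≤ (b * a + 1) * μ (Ioi x) := by
  rw [convn_succ_apply_Ioi, ← lintegral_add_compl _ measurableSet_Iic, compl_Iic, add_mul,
    one_mul, mul_assoc]
  gcongr ?_ + ?_
  · calc ∫⁻ y in Iic x, convn μ n (Ioi (x - y)) ∂μ
        ≤ ∫⁻ y in Iic x, b * μ (Ioi (x - y)) ∂μ :=
          setLIntegral_mono ((measurable_measure_Ioi_sub μ x).const_mul b)
            fun y hy => hb _ (sub_nonneg.2 hy)
      _ = b * ∫⁻ y in Iic x, μ (Ioi (x - y)) ∂μ :=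
          lintegral_const_mul _ (measurable_measure_Ioi_sub μ x)
      _ ≤ b * (a * μ (Ioi x)) := by gcongr
  · calc ∫⁻ y in Ioi x, convn μ n (Ioi (x - y)) ∂μ ≤ ∫⁻ _ in Ioi x, 1 ∂μ :=
          lintegral_mono fun _ => prob_le_one
      _ = μ (Ioi x) := setLIntegral_one _

lemma convn_apply_Ioi_le_geom_sum (hpos : μ (Iic 0) = 0) {T : ℝ} {r D : ℝ≥0∞}
    (hT : ∀ x, T ≤ x → convn μ 2 (Ioi x) ≤ (r + 1) * μ (Ioi x))
    (hD : 1 ≤ D) (hDT : 1 ≤ D * μ (Ioi T)) (n : ℕ) {x : ℝ} (hx : 0 ≤ x) :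
    convn μ n (Ioi x) ≤ D * (∑ k ∈ Finset.range n, r ^ k) * μ (Ioi x) := by
  induction n generalizing x with
  | zero => simp [convn_zero, hx.not_gt]
  | succ n ih =>
    rcases le_or_gt T x with hTx | hxT
    · calc convn μ (n + 1) (Ioi x)
          ≤ (D * (∑ k ∈ Finset.range n, r ^ k) * r + 1) * μ (Ioi x) :=
            convn_succ_apply_Ioi_le (lintegral_Iic_measure_Ioi_sub_le hpos (hT x hTx)) @ih
        _ ≤ D * (∑ k ∈ Finset.range (n + 1), r ^ k) * μ (Ioi x) := by
            rw [geom_sum_succ, mul_add, mul_one, mul_comm r, ← mul_assoc]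
            gcongr
    · have hsum : 1 ≤ ∑ k ∈ Finset.range (n + 1), r ^ k := by
        rw [geom_sum_succ]
        exact le_add_self
      calc convn μ (n + 1) (Ioi x) ≤ 1 := prob_le_one
        _ ≤ D * 1 * μ (Ioi T) := by rwa [mul_one]
        _ ≤ D * (∑ k ∈ Finset.range (n + 1), r ^ k) * μ (Ioi x) := by gcongr

end ProbabilityOnPositives

lemma geom_sum_one_add_le {ε : ℝ} (hε : 0 < ε) (n : ℕ) :
    ∑ k ∈ Finset.range n, (1 + ε) ^ k ≤ (1 + ε) ^ n / ε := by
  rw [geom_sum_eq (by linarith), add_sub_cancel_left]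
  gcongr
  exact sub_le_self _ zero_le_one

lemma Subexp.eventually_mtail_convn_two_le {μ : Measure ℝ} (hμ : Subexp μ) {c : ℝ} (hc : 2 < c) :
    ∀ᶠ x in atTop, mtail (convn μ 2) x ≤ c * mtail μ x := by
  filter_upwards [hμ.2.eventually_lt_const hc] with x hx
  exact ((div_lt_iff₀ (hμ.1 x)).1 hx).le

/-- Kesten's bound: if `F` is a subexponential distribution on `(0,∞)`, then for every
`ε > 0` there is `C_ε > 0` with `1 - F^{*n}(x) ≤ C_ε (1+ε)^n (1 - F(x))` for all
`n ≥ 1` and `x ≥ 0`. -/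
theorem kesten_bound (μ : Measure ℝ) [IsProbabilityMeasure μ]
    (hpos : μ (Set.Iic 0) = 0) (hsub : Subexp μ) :
    ∀ ε > (0 : ℝ), ∃ C > (0 : ℝ), ∀ n : ℕ, 1 ≤ n → ∀ x : ℝ, 0 ≤ x →
      mtail (convn μ n) x ≤ C * (1 + ε) ^ n * mtail μ x := by
  intro ε hε
  obtain ⟨T, hT⟩ := eventually_atTop.1
    (hsub.eventually_mtail_convn_two_le (show 2 < 2 + ε by linarith))
  have ht : 0 < mtail μ T := hsub.1 T
  set D := 1 + (mtail μ T)⁻¹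
  refine ⟨D / ε, by positivity, fun n _ x hx => ?_⟩
  have hr : ∀ x, T ≤ x → convn μ 2 (Ioi x) ≤ (ENNReal.ofReal (1 + ε) + 1) * μ (Ioi x) := by
    intro x hTx
    rw [← ENNReal.ofReal_one, ← ENNReal.ofReal_add (by positivity) zero_le_one,
      measure_Ioi_le_ofReal_mul_iff _ _ (by positivity)]
    linarith [hT x hTx]
  have hD : 1 ≤ ENNReal.ofReal D :=
    ENNReal.one_le_ofReal.2 (le_add_of_nonneg_right (inv_nonneg.2 ht.le))
  have hDT : 1 ≤ ENNReal.ofReal D * μ (Ioi T) := by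
    rw [← ENNReal.ofReal_toReal (measure_ne_top μ (Ioi T)), ← ENNReal.ofReal_mul (by positivity),
      ← ENNReal.ofReal_one]
    refine ENNReal.ofReal_le_ofReal ?_
    rw [← mtail, add_mul, inv_mul_cancel₀ ht.ne']
    linarith
  rw [← measure_Ioi_le_ofReal_mul_iff _ _ (by positivity)]
  refine (convn_apply_Ioi_le_geom_sum hpos hr hD hDT n hx).trans ?_
  gcongr
  simp_rw [← ENNReal.ofReal_pow (by positivity : 0 ≤ 1 + ε)]
  rw [← ENNReal.ofReal_sum_of_nonneg fun _ _ => by positivity, ← ENNReal.ofReal_mul (by positivity)]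
  refine ENNReal.ofReal_le_ofReal ?_
  rw [div_mul_eq_mul_div, mul_div_assoc]
  gcongr
  exact geom_sum_one_add_le hε n
end

section
/- For a standard one-dimensional Brownian motion B, for every t ≥ 0 and x > 0, P(inf_{0≤s≤t} B(s) < -x) = P(sup_{0≤s≤t} B(s) > x) = 2 P(B(t) > x). -/
open MeasureTheory Filter ProbabilityTheory

variable {Ω : Type*} [MeasurableSpace Ω]

/-- `B` is a standard one-dimensional Brownian motion (on `[0,∞)`) under `P`. -/
structure IsStdBM (P : Measure Ω) (B : ℝ → Ω → ℝ) : Prop where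
  meas : ∀ t, Measurable (B t)
  init : ∀ᵐ ω ∂P, B 0 ω = 0
  cont : ∀ᵐ ω ∂P, Continuous fun t => B t ω
  incr : ∀ s t : ℝ, 0 ≤ s → s ≤ t →
    P.map (fun ω => B t ω - B s ω) = gaussianReal 0 (Real.toNNReal (t - s))
  indep : ∀ (n : ℕ) (t : Fin (n + 1) → ℝ), Monotone t → 0 ≤ t 0 →
    iIndepFun
      (fun i : Fin n => fun ω => B (t i.succ) ω - B (t i.castSucc) ω) P

/-!
Sample `B` on the dyadic grids `k t / 2 ^ m` of `[0, t]`. Along a grid, `B` is a random walk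
whose increments are independent, and `S n - S k` has a symmetric law. The event that the walk
first exceeds `x` at step `k` depends only on the increments before step `k`, so it is independent
of `S n - S k`. Reflecting the walk after that step gives `P(max_{k ≤ n} S k > x) ≤ 2 P(S n > x)`.
It also gives the reverse inequality at level `x + 2δ`, up to twice the probability that some
step exceeds `δ`. By continuity of paths, the grid maxima increase to the supremum and the largest
step tends to `0`. Letting `δ → 0` gives `P(sup B > x) = 2 P(B t > x)`; the infimum is the supremum
of `-B`, which is again a Brownian motion.
-/

open Finset Function Topology

def partialSum {α : Type*} (X : ℕ → α → ℝ) (k : ℕ) (ω : α) : ℝ :=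
  ∑ i ∈ range k, X i ω

def firstPassage {α : Type*} (X : ℕ → α → ℝ) (x : ℝ) (k : ℕ) : Set α :=
  {ω | x < partialSum X k ω ∧ ∀ j < k, partialSum X j ω ≤ x}

def increments {α : Type*} (Y : ℕ → α → ℝ) (i : ℕ) (ω : α) : ℝ := Y (i + 1) ω - Y i ω

section RandomWalk

variable {α : Type*} {X : ℕ → α → ℝ} {x : ℝ} {n : ℕ}

lemma partialSum_zero (X : ℕ → α → ℝ) (ω : α) : partialSum X 0 ω = 0 := by
  simp [partialSum]

lemma partialSum_succ (X : ℕ → α → ℝ) (k : ℕ) (ω : α) :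
    partialSum X (k + 1) ω = partialSum X k ω + X k ω :=
  sum_range_succ _ _

lemma partialSum_sub_partialSum {k n : ℕ} (hkn : k ≤ n) (X : ℕ → α → ℝ) (ω : α) :
    partialSum X n ω - partialSum X k ω = ∑ i ∈ Ico k n, X i ω :=
  (sum_Ico_eq_sub _ hkn).symm

lemma partialSum_increments (Y : ℕ → α → ℝ) (k : ℕ) (ω : α) :
    partialSum (increments Y) k ω = Y k ω - Y 0 ω :=
  sum_range_sub (fun i => Y i ω) k

lemma pairwise_disjoint_firstPassage : Pairwise (Disjoint on firstPassage X x) := by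
  suffices ∀ {j k}, j < k → Disjoint (firstPassage X x j) (firstPassage X x k) from
    fun j k hjk => hjk.lt_or_gt.elim this fun h => (this h).symm
  intro j k hjk
  exact Set.disjoint_left.2 fun ω hj hk => (hk.2 j hjk).not_gt hj.1

lemma biUnion_firstPassage :
    ⋃ k ∈ range (n + 1), firstPassage X x k = {ω | ∃ k ≤ n, x < partialSum X k ω} := by
  ext ω
  simp only [Set.mem_iUnion, mem_range, Nat.lt_succ_iff, Set.mem_ofPred_eq, firstPassage]
  constructor
  · rintro ⟨k, hk, hx, -⟩
    exact ⟨k, hk, hx⟩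
  · rintro ⟨k, hk, hx⟩
    classical
    have hex : ∃ j, x < partialSum X j ω := ⟨k, hx⟩
    exact ⟨Nat.find hex, (Nat.find_min' hex hx).trans hk, Nat.find_spec hex,
      fun j hj => not_lt.1 (Nat.find_min hex hj)⟩

lemma partialSum_le_of_mem_firstPassage {δ : ℝ} {k : ℕ} {ω : α} (hx : 0 ≤ x) (hδ : 0 ≤ δ)
    (hω : ω ∈ firstPassage X x k) (hkn : k ≤ n) (hsmall : ∀ i < n, |X i ω| ≤ δ) :
    partialSum X k ω ≤ x + δ := by
  cases k with
  | zero => simpa [partialSum_zero] using add_nonneg hx hδ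
  | succ j =>
    rw [partialSum_succ]
    linarith [hω.2 j j.lt_succ_self, le_of_abs_le (hsmall j hkn)]

lemma setOf_add_two_mul_lt_partialSum_subset {δ : ℝ} (hx : 0 ≤ x) (hδ : 0 ≤ δ) :
    {ω | x + 2 * δ < partialSum X n ω} ⊆ {ω | ∃ i < n, δ < |X i ω|} ∪
      ⋃ k ∈ range (n + 1), firstPassage X x k ∩ {ω | δ < partialSum X n ω - partialSum X k ω} := by
  intro ω hω
  simp only [Set.mem_ofPred_eq] at hω
  by_cases hωE : ∃ i < n, δ < |X i ω|
  · exact Or.inl hωE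
  have hωM : ω ∈ ⋃ k ∈ range (n + 1), firstPassage X x k := by
    rw [biUnion_firstPassage]
    exact ⟨n, le_rfl, by linarith⟩
  obtain ⟨k, hk, hA⟩ := Set.mem_iUnion₂.1 hωM
  have := partialSum_le_of_mem_firstPassage hx hδ hA (Nat.lt_succ_iff.1 (mem_range.1 hk))
    (by simpa using hωE)
  exact Or.inr (Set.mem_iUnion₂.2 ⟨k, hk, hA, show δ < _ by linarith⟩)

lemma firstPassage_inter_lt_neg_subset {δ : ℝ} (hx : 0 ≤ x) (hδ : 0 ≤ δ) {k : ℕ} (hkn : k ≤ n) :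
    firstPassage X x k ∩ {ω | partialSum X n ω - partialSum X k ω < -δ} ⊆
      firstPassage X x k ∩ {ω | x < partialSum X n ω}ᶜ
        ∪ firstPassage X x k ∩ {ω | ∃ i < n, δ < |X i ω|} := by
  rintro ω ⟨hA, hω⟩
  by_cases hωE : ∃ i < n, δ < |X i ω|
  · exact Or.inr ⟨hA, hωE⟩
  have := partialSum_le_of_mem_firstPassage hx hδ hA hkn (by simpa using hωE)
  simp only [Set.mem_ofPred_eq] at hω
  refine Or.inl ⟨hA, ?_⟩
  simp only [Set.mem_compl_iff, Set.mem_ofPred_eq, not_lt]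
  linarith

lemma measurableSet_firstPassage {m : MeasurableSpace α} {k : ℕ}
    (hS : ∀ j ≤ k, Measurable[m] (partialSum X j)) : MeasurableSet[m] (firstPassage X x k) := by
  simp_rw [firstPassage, Set.ofPred_and, Set.ofPred_forall]
  exact (measurableSet_lt measurable_const (hS k le_rfl)).inter <|
    MeasurableSet.iInter fun j => MeasurableSet.iInter fun hj =>
      measurableSet_le (hS j hj.le) measurable_const

end RandomWalk

section Measure

variable {P : Measure Ω}

lemma measure_lt_neg_eq_measure_gt {Y : Ω → ℝ} (hY : Measurable Y)
    (hsymm : P.map (fun ω => -Y ω) = P.map Y) (c : ℝ) :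
    P {ω | Y ω < -c} = P {ω | c < Y ω} := by
  have hneg : {ω | Y ω < -c} = (fun ω => -Y ω) ⁻¹' Set.Ioi c := by
    ext ω
    simp only [Set.mem_ofPred_eq, Set.mem_preimage, Set.mem_Ioi]
    exact lt_neg
  rw [hneg, ← Measure.map_apply (f := fun ω => -Y ω) hY.neg measurableSet_Ioi, hsymm,
    Measure.map_apply hY measurableSet_Ioi]
  rfl

lemma tendsto_measure_add_one_div_lt (Y : Ω → ℝ) (x : ℝ) :
    Tendsto (fun j : ℕ => P {ω | x + 1 / (j + 1) < Y ω}) atTop (𝓝 (P {ω | x < Y ω})) := by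
  have hmono : Monotone fun j : ℕ => {ω | x + 1 / ((j : ℝ) + 1) < Y ω} := by
    intro j j' hjj' ω hω
    simp only [Set.mem_ofPred_eq] at hω ⊢
    exact lt_of_le_of_lt (by gcongr) hω
  suffices hunion : ⋃ j : ℕ, {ω | x + 1 / ((j : ℝ) + 1) < Y ω} = {ω | x < Y ω} by
    rw [← hunion]
    exact tendsto_measure_iUnion_atTop hmono
  ext ω
  simp only [Set.mem_iUnion, Set.mem_ofPred_eq]
  constructor
  · rintro ⟨j, hj⟩
    linarith [Nat.one_div_pos_of_nat (α := ℝ) (n := j)]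
  · intro hω
    obtain ⟨j, hj⟩ := exists_nat_one_div_lt (sub_pos.2 hω)
    exact ⟨j, by linarith⟩

end Measure

section RandomWalkMeasure

variable {P : Measure Ω} {X : ℕ → Ω → ℝ} {x : ℝ} {n : ℕ}

lemma measurable_partialSum (hX : ∀ i, Measurable (X i)) (k : ℕ) :
    Measurable (partialSum X k) :=
  Finset.measurable_fun_sum _ fun i _ => hX i

lemma measure_exists_lt_partialSum_inter (hX : ∀ i, Measurable (X i)) {T : Set Ω}
    (hT : MeasurableSet T) :
    P ({ω | ∃ k ≤ n, x < partialSum X k ω} ∩ T)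
      = ∑ k ∈ range (n + 1), P (firstPassage X x k ∩ T) := by
  rw [← biUnion_firstPassage, Set.iUnion₂_inter, measure_biUnion_finset]
  · exact fun j _ k _ hjk => (pairwise_disjoint_firstPassage hjk).mono
      Set.inter_subset_left Set.inter_subset_left
  · exact fun k _ => (measurableSet_firstPassage fun j _ => measurable_partialSum hX j).inter hT

lemma measurableSet_exists_lt_abs (hX : ∀ i, Measurable (X i)) (n : ℕ) (δ : ℝ) :
    MeasurableSet {ω | ∃ i < n, δ < |X i ω|} :=
  measurableSet_setOfPred.2 <| Measurable.exists fun i =>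
    measurable_const.and (measurableSet_setOfPred.1 (measurableSet_lt measurable_const (hX i).abs))

section Reflection

variable (hX : ∀ i, Measurable (X i)) (hind : iIndepFun (fun i : Fin n => X i) P)
include hX hind

lemma measure_firstPassage_inter_preimage {k : ℕ} (hk : k ≤ n) {s : Set ℝ} (hs : MeasurableSet s) :
    P (firstPassage X x k ∩ (fun ω => partialSum X n ω - partialSum X k ω) ⁻¹' s)
      = P (firstPassage X x k) * P ((fun ω => partialSum X n ω - partialSum X k ω) ⁻¹' s) := by
  let σX : Fin n → MeasurableSpace Ω := fun j => MeasurableSpace.comap (X j) inferInstance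
  have hindep :
      Indep (⨆ j ∈ {j : Fin n | (j : ℕ) < k}, σX j) (⨆ j ∈ {j : Fin n | k ≤ (j : ℕ)}, σX j) P :=
    indep_iSup_of_disjoint (fun j : Fin n => (hX j).comap_le) hind.iIndep
      (Set.disjoint_left.2 fun j (h1 : (j : ℕ) < k) (h2 : k ≤ (j : ℕ)) => (h1.trans_le h2).false)
  have hX_le : ∀ (i : ℕ) (hi : i < n) {T : Set (Fin n)}, ⟨i, hi⟩ ∈ T →
      MeasurableSpace.comap (X i) inferInstance ≤ ⨆ j ∈ T, σX j :=
    fun i hi T hT => le_iSup₂ (f := fun (j : Fin n) _ => σX j) ⟨i, hi⟩ hT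
  have hA : MeasurableSet[⨆ j ∈ {j : Fin n | (j : ℕ) < k}, σX j] (firstPassage X x k) :=
    measurableSet_firstPassage fun j hj => Finset.measurable_fun_sum _ fun i hi =>
      (comap_measurable (X i)).mono (hX_le i (by simp at hi; omega) (by simp at hi ⊢; omega)) le_rfl
  have hD : Measurable[⨆ j ∈ {j : Fin n | k ≤ (j : ℕ)}, σX j]
      fun ω => partialSum X n ω - partialSum X k ω := by
    simp_rw [partialSum_sub_partialSum hk]
    exact Finset.measurable_fun_sum _ fun i hi =>
      (comap_measurable (X i)).mono (hX_le i (by simp at hi; omega) (by simp at hi ⊢; omega)) le_rfl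
  exact (Indep_iff _ _ P).1 hindep _ _ hA (hD hs)

variable (hsymm : ∀ k ≤ n, P.map (fun ω => -(partialSum X n ω - partialSum X k ω))
  = P.map (fun ω => partialSum X n ω - partialSum X k ω))
include hsymm

lemma measure_firstPassage_inter_lt_neg {k : ℕ} (hk : k ≤ n) (c : ℝ) :
    P (firstPassage X x k ∩ {ω | partialSum X n ω - partialSum X k ω < -c})
      = P (firstPassage X x k ∩ {ω | c < partialSum X n ω - partialSum X k ω}) := by
  have hD : Measurable fun ω => partialSum X n ω - partialSum X k ω :=
    (measurable_partialSum hX n).sub (measurable_partialSum hX k)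
  calc _ = P (firstPassage X x k) * P {ω | partialSum X n ω - partialSum X k ω < -c} :=
        measure_firstPassage_inter_preimage hX hind hk measurableSet_Iio
    _ = P (firstPassage X x k) * P {ω | c < partialSum X n ω - partialSum X k ω} := by
        rw [measure_lt_neg_eq_measure_gt hD (hsymm k hk) c]
    _ = _ := (measure_firstPassage_inter_preimage hX hind hk measurableSet_Ioi).symm

lemma measure_exists_lt_partialSum_le :
    P {ω | ∃ k ≤ n, x < partialSum X k ω} ≤ 2 * P {ω | x < partialSum X n ω} := by
  set T := {ω | x < partialSum X n ω}
  have hT : MeasurableSet T := measurableSet_lt measurable_const (measurable_partialSum hX n)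
  have hreflect : ∀ k ∈ range (n + 1),
      P (firstPassage X x k ∩ Tᶜ) ≤ P (firstPassage X x k ∩ T) := by
    intro k hk
    have hkn : k ≤ n := Nat.lt_succ_iff.1 (mem_range.1 hk)
    calc P (firstPassage X x k ∩ Tᶜ)
        ≤ P (firstPassage X x k ∩ {ω | partialSum X n ω - partialSum X k ω < -0}) := by
          refine measure_mono fun ω ⟨hA, hω⟩ => ⟨hA, ?_⟩
          simp only [T, Set.mem_compl_iff, Set.mem_ofPred_eq, not_lt] at hω ⊢
          linarith [hA.1]
      _ = P (firstPassage X x k ∩ {ω | 0 < partialSum X n ω - partialSum X k ω}) :=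
          measure_firstPassage_inter_lt_neg hX hind hsymm hkn 0
      _ ≤ P (firstPassage X x k ∩ T) := by
          refine measure_mono fun ω ⟨hA, hω⟩ => ⟨hA, ?_⟩
          simp only [T, Set.mem_ofPred_eq] at hω ⊢
          linarith [hA.1]
  calc P {ω | ∃ k ≤ n, x < partialSum X k ω}
      = P ({ω | ∃ k ≤ n, x < partialSum X k ω} ∩ T)
        + P ({ω | ∃ k ≤ n, x < partialSum X k ω} ∩ Tᶜ) :=
        (measure_inter_add_sdiff _ hT).symm
    _ = ∑ k ∈ range (n + 1), P (firstPassage X x k ∩ T)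
        + ∑ k ∈ range (n + 1), P (firstPassage X x k ∩ Tᶜ) := by
        rw [measure_exists_lt_partialSum_inter hX hT,
          measure_exists_lt_partialSum_inter hX hT.compl]
    _ ≤ 2 * ∑ k ∈ range (n + 1), P (firstPassage X x k ∩ T) := by
        rw [two_mul]
        exact add_le_add_right (sum_le_sum hreflect) _
    _ ≤ 2 * P T := by
        rw [← measure_exists_lt_partialSum_inter hX hT]
        gcongr
        exact Set.inter_subset_right

lemma measure_lt_partialSum_add_le {δ : ℝ} (hx : 0 ≤ x) (hδ : 0 ≤ δ) :
    P {ω | x < partialSum X n ω} + P {ω | x + 2 * δ < partialSum X n ω}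
      ≤ P {ω | ∃ k ≤ n, x < partialSum X k ω} + 2 * P {ω | ∃ i < n, δ < |X i ω|} := by
  set M := {ω | ∃ k ≤ n, x < partialSum X k ω}
  set T := {ω | x < partialSum X n ω}
  set E := {ω | ∃ i < n, δ < |X i ω|}
  have hT : MeasurableSet T := measurableSet_lt measurable_const (measurable_partialSum hX n)
  have hE : MeasurableSet E := measurableSet_exists_lt_abs hX n δ
  have hreflect : ∀ k ∈ range (n + 1),
      P (firstPassage X x k ∩ {ω | δ < partialSum X n ω - partialSum X k ω})
        ≤ P (firstPassage X x k ∩ Tᶜ) + P (firstPassage X x k ∩ E) := by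
    intro k hk
    have hkn : k ≤ n := Nat.lt_succ_iff.1 (mem_range.1 hk)
    rw [← measure_firstPassage_inter_lt_neg hX hind hsymm hkn δ]
    exact (measure_mono (firstPassage_inter_lt_neg_subset hx hδ hkn)).trans (measure_union_le _ _)
  calc P T + P {ω | x + 2 * δ < partialSum X n ω}
      ≤ P (M ∩ T) + (P E + ∑ k ∈ range (n + 1),
          P (firstPassage X x k ∩ {ω | δ < partialSum X n ω - partialSum X k ω})) := by
        have hTM : T ⊆ M := fun ω hω => ⟨n, le_rfl, hω⟩
        refine add_le_add (congrArg P (Set.inter_eq_right.2 hTM)).ge ?_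
        exact (measure_mono (setOf_add_two_mul_lt_partialSum_subset hx hδ)).trans <|
          (measure_union_le _ _).trans (add_le_add_right (measure_biUnion_finset_le _ _) _)
    _ ≤ P (M ∩ T) + (P E + (∑ k ∈ range (n + 1), P (firstPassage X x k ∩ Tᶜ)
          + ∑ k ∈ range (n + 1), P (firstPassage X x k ∩ E))) := by
        rw [← sum_add_distrib]
        gcongr with k hk
        exact hreflect k hk
    _ = P (M ∩ T) + P (M ∩ Tᶜ) + (P E + P (M ∩ E)) := by
        rw [measure_exists_lt_partialSum_inter hX hT.compl,
          measure_exists_lt_partialSum_inter hX hE]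
        ring
    _ ≤ P M + 2 * P E := by
        rw [← Set.sdiff_eq, measure_inter_add_sdiff _ hT, two_mul]
        gcongr
        exact Set.inter_subset_right

end Reflection

end RandomWalkMeasure

noncomputable def dyadicPoint (t : ℝ) (m k : ℕ) : ℝ := k * (t / 2 ^ m)

section Dyadic

variable {t : ℝ}

lemma dyadicPoint_zero (t : ℝ) (m : ℕ) : dyadicPoint t m 0 = 0 := by
  simp [dyadicPoint]

lemma dyadicPoint_two_pow (t : ℝ) (m : ℕ) : dyadicPoint t m (2 ^ m) = t := by
  simp [dyadicPoint, mul_div_cancel₀]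

lemma dyadicPoint_succ_sub (t : ℝ) (m k : ℕ) :
    dyadicPoint t m (k + 1) - dyadicPoint t m k = t / 2 ^ m := by
  simp only [dyadicPoint]; push_cast; ring

lemma dyadicPoint_succ_two_mul (t : ℝ) (m k : ℕ) :
    dyadicPoint t (m + 1) (2 * k) = dyadicPoint t m k := by
  simp only [dyadicPoint]; push_cast; field_simp; ring

lemma monotone_dyadicPoint (ht : 0 ≤ t) (m : ℕ) : Monotone (dyadicPoint t m) :=
  fun _ _ hjk => mul_le_mul_of_nonneg_right (Nat.cast_le.2 hjk) (by positivity)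

lemma dyadicPoint_mem_Icc (ht : 0 ≤ t) {m k : ℕ} (hk : k ≤ 2 ^ m) :
    dyadicPoint t m k ∈ Set.Icc 0 t := by
  refine ⟨by unfold dyadicPoint; positivity, ?_⟩
  simpa [dyadicPoint_two_pow] using monotone_dyadicPoint ht m hk

lemma exists_abs_dyadicPoint_sub_le {s : ℝ} (hs : s ∈ Set.Icc 0 t) (m : ℕ) :
    ∃ k ≤ 2 ^ m, |dyadicPoint t m k - s| ≤ t / 2 ^ m := by
  obtain ⟨hs0, hst⟩ := hs
  rcases hs0.trans hst |>.eq_or_lt with rfl | ht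
  · exact ⟨0, Nat.zero_le _, by simp [dyadicPoint, le_antisymm hst hs0]⟩
  have hh : 0 < t / 2 ^ m := by positivity
  refine ⟨⌊s / (t / 2 ^ m)⌋₊, ?_, ?_⟩
  · refine Nat.floor_le_of_le ?_
    rw [div_le_iff₀ hh]
    simpa [mul_div_cancel₀] using hst
  · have h1 := Nat.floor_le (div_nonneg hs0 hh.le)
    have h2 := Nat.lt_floor_add_one (s / (t / 2 ^ m))
    rw [le_div_iff₀ hh] at h1
    rw [div_lt_iff₀ hh] at h2
    rw [abs_le, dyadicPoint]
    constructor <;> nlinarith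

lemma tendsto_div_two_pow (t : ℝ) : Tendsto (fun m : ℕ => t / 2 ^ m) atTop (𝓝 0) :=
  tendsto_const_nhds.div_atTop (tendsto_pow_atTop_atTop_of_one_lt one_lt_two)

end Dyadic

section ContinuousPath

variable {f : ℝ → ℝ} {t : ℝ}

lemma Continuous.lt_iSup_Icc_iff_exists_dyadicPoint (hf : Continuous f) (ht : 0 ≤ t) {x : ℝ} :
    x < ⨆ s : Set.Icc 0 t, f s ↔ ∃ m : ℕ, ∃ k ≤ 2 ^ m, x < f (dyadicPoint t m k) := by
  constructor
  · intro hx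
    have : Nonempty (Set.Icc 0 t) := ⟨⟨0, le_rfl, ht⟩⟩
    obtain ⟨s, hs⟩ := exists_lt_of_lt_ciSup hx
    obtain ⟨ε, hε, hball⟩ := Metric.eventually_nhds_iff.1
      (hf.continuousAt.eventually (lt_mem_nhds hs))
    obtain ⟨m, hm⟩ := ((tendsto_div_two_pow t).eventually (gt_mem_nhds hε)).exists
    obtain ⟨k, hk, hks⟩ := exists_abs_dyadicPoint_sub_le s.2 m
    exact ⟨m, k, hk, hball (by rw [Real.dist_eq]; linarith)⟩
  · rintro ⟨m, k, hk, hx⟩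
    have hbdd : BddAbove (Set.range fun s : Set.Icc 0 t => f s) := by
      simpa [Set.image_eq_range] using
        (isCompact_Icc.image_of_continuousOn hf.continuousOn).bddAbove
    exact hx.trans_le (le_ciSup hbdd ⟨_, dyadicPoint_mem_Icc ht hk⟩)

lemma Continuous.eventually_abs_sub_dyadicPoint_le (hf : Continuous f) (ht : 0 ≤ t) {δ : ℝ}
    (hδ : 0 < δ) :
    ∀ᶠ m in atTop, ∀ i < 2 ^ m,
      |f (dyadicPoint t m (i + 1)) - f (dyadicPoint t m i)| ≤ δ := by
  obtain ⟨η, hη, hunif⟩ := Metric.uniformContinuousOn_iff.1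
    (isCompact_Icc.uniformContinuousOn_of_continuous hf.continuousOn) δ hδ
  filter_upwards [(tendsto_div_two_pow t).eventually (gt_mem_nhds hη)] with m hm i hi
  have hdist : dist (dyadicPoint t m (i + 1)) (dyadicPoint t m i) < η := by
    rwa [Real.dist_eq, dyadicPoint_succ_sub, abs_of_nonneg (by positivity)]
  exact (hunif _ (dyadicPoint_mem_Icc ht hi) _ (dyadicPoint_mem_Icc ht hi.le) hdist).le

end ContinuousPath

lemma Real.iInf_eq_neg_iSup_neg {ι : Sort*} (f : ι → ℝ) : ⨅ i, f i = -⨆ i, -f i := by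
  rw [iSup, ← Real.sInf_neg, iInf]
  congr 1
  ext y
  simp [neg_eq_iff_eq_neg]

section BrownianMotion

variable {P : Measure Ω} {B : ℝ → Ω → ℝ}

lemma IsStdBM.map_neg_sub (hB : IsStdBM P B) {s t : ℝ} (hs : 0 ≤ s) (hst : s ≤ t) :
    P.map (fun ω => -(B t ω - B s ω)) = P.map (fun ω => B t ω - B s ω) := by
  change P.map ((fun y : ℝ => -y) ∘ fun ω => B t ω - B s ω) = _
  rw [← Measure.map_map (g := fun y : ℝ => -y) (f := fun ω => B t ω - B s ω) measurable_neg
      ((hB.meas t).sub (hB.meas s)), hB.incr s t hs hst,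
    gaussianReal_map_neg, neg_zero]

lemma IsStdBM.neg (hB : IsStdBM P B) : IsStdBM P fun s ω => -B s ω where
  meas s := (hB.meas s).neg
  init := by filter_upwards [hB.init] with ω h using by simp [h]
  cont := by filter_upwards [hB.cont] with ω h using h.neg
  incr s t hs hst := by
    have h : (fun ω => -B t ω - -B s ω) = fun ω => -(B t ω - B s ω) := by
      funext ω
      ring
    rw [h, hB.map_neg_sub hs hst, hB.incr s t hs hst]
  indep n t ht ht0 := by
    convert (hB.indep n t ht ht0).comp (fun _ y => -y) fun _ => measurable_neg using 2 with i
    ext ω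
    simp only [Function.comp_apply]
    ring

lemma IsStdBM.iIndepFun_increments (hB : IsStdBM P B) {u : ℕ → ℝ} (hu : Monotone u)
    (hu0 : 0 ≤ u 0) (n : ℕ) :
    iIndepFun (fun i : Fin n => increments (fun k => B (u k)) i) P :=
  hB.indep n (fun i => u i) (fun _ _ hij => hu hij) hu0

lemma IsStdBM.map_neg_partialSum_increments (hB : IsStdBM P B) {u : ℕ → ℝ} (hu : Monotone u)
    (hu0 : 0 ≤ u 0) {k n : ℕ} (hk : k ≤ n) :
    P.map (fun ω => -(partialSum (increments fun k => B (u k)) n ω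
        - partialSum (increments fun k => B (u k)) k ω))
      = P.map (fun ω => partialSum (increments fun k => B (u k)) n ω
        - partialSum (increments fun k => B (u k)) k ω) := by
  simp_rw [partialSum_increments, sub_sub_sub_cancel_right]
  exact hB.map_neg_sub (hu0.trans (hu (Nat.zero_le k))) (hu hk)

lemma IsStdBM.measure_exists_lt_sub_le (hB : IsStdBM P B) {u : ℕ → ℝ} (hu : Monotone u)
    (hu0 : 0 ≤ u 0) (n : ℕ) (x : ℝ) :
    P {ω | ∃ k ≤ n, x < B (u k) ω - B (u 0) ω} ≤ 2 * P {ω | x < B (u n) ω - B (u 0) ω} := by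
  simpa only [partialSum_increments] using measure_exists_lt_partialSum_le
    (X := increments fun k => B (u k)) (fun i => (hB.meas _).sub (hB.meas _))
    (hB.iIndepFun_increments hu hu0 n)
    (fun k hk => hB.map_neg_partialSum_increments hu hu0 hk) (x := x)

lemma IsStdBM.measure_lt_sub_add_le (hB : IsStdBM P B) {u : ℕ → ℝ} (hu : Monotone u)
    (hu0 : 0 ≤ u 0) (n : ℕ) {x δ : ℝ} (hx : 0 ≤ x) (hδ : 0 ≤ δ) :
    P {ω | x < B (u n) ω - B (u 0) ω} + P {ω | x + 2 * δ < B (u n) ω - B (u 0) ω}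
      ≤ P {ω | ∃ k ≤ n, x < B (u k) ω - B (u 0) ω}
        + 2 * P {ω | ∃ i < n, δ < |B (u (i + 1)) ω - B (u i) ω|} := by
  simpa only [partialSum_increments, increments] using measure_lt_partialSum_add_le
    (X := increments fun k => B (u k)) (fun i => (hB.meas _).sub (hB.meas _))
    (hB.iIndepFun_increments hu hu0 n) (fun k hk => hB.map_neg_partialSum_increments hu hu0 hk)
    hx hδ

lemma IsStdBM.measure_lt_iSup_Icc_eq_iSup (hB : IsStdBM P B) {t : ℝ} (ht : 0 ≤ t) (x : ℝ) :
    P {ω | x < ⨆ s : Set.Icc 0 t, B s ω}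
      = ⨆ m : ℕ, P {ω | ∃ k ≤ 2 ^ m, x < B (dyadicPoint t m k) ω - B 0 ω} := by
  have hmono : Monotone fun m : ℕ => {ω | ∃ k ≤ 2 ^ m, x < B (dyadicPoint t m k) ω - B 0 ω} :=
    monotone_nat_of_le_succ fun m ω ⟨k, hk, hx⟩ =>
      ⟨2 * k, by rw [pow_succ]; omega, by rwa [dyadicPoint_succ_two_mul]⟩
  rw [← hmono.measure_iUnion]
  refine measure_congr (eventuallyEq_set.2 ?_)
  filter_upwards [hB.cont, hB.init] with ω hcont h0
  simp only [Set.mem_iUnion, Set.mem_ofPred_eq, h0, sub_zero]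
  exact hcont.lt_iSup_Icc_iff_exists_dyadicPoint ht

lemma IsStdBM.tendsto_measure_exists_lt_abs_sub [IsFiniteMeasure P] (hB : IsStdBM P B) {t : ℝ}
    (ht : 0 ≤ t) {δ : ℝ} (hδ : 0 < δ) :
    Tendsto (fun m : ℕ => P {ω | ∃ i < 2 ^ m,
      δ < |B (dyadicPoint t m (i + 1)) ω - B (dyadicPoint t m i) ω|}) atTop (𝓝 0) := by
  have h := tendsto_measure_of_ae_tendsto_indicator_of_isFiniteMeasure atTop (μ := P)
    MeasurableSet.empty (fun m => measurableSet_exists_lt_abs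
      (X := increments fun k => B (dyadicPoint t m k)) (fun i => (hB.meas _).sub (hB.meas _))
      (2 ^ m) δ) ?_
  · simpa [increments] using h
  filter_upwards [hB.cont] with ω hcont
  filter_upwards [hcont.eventually_abs_sub_dyadicPoint_le ht hδ] with m hm
  simpa [increments] using hm

lemma IsStdBM.measure_lt_iSup_Icc [IsFiniteMeasure P] (hB : IsStdBM P B) {t x : ℝ} (ht : 0 ≤ t)
    (hx : 0 ≤ x) :
    P {ω | x < ⨆ s : Set.Icc 0 t, B s ω} = 2 * P {ω | x < B t ω - B 0 ω} := by
  rw [hB.measure_lt_iSup_Icc_eq_iSup ht]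
  set L := ⨆ m : ℕ, P {ω | ∃ k ≤ 2 ^ m, x < B (dyadicPoint t m k) ω - B 0 ω}
  refine le_antisymm (iSup_le fun m => ?_) ?_
  · simpa [dyadicPoint_zero, dyadicPoint_two_pow] using
      hB.measure_exists_lt_sub_le (monotone_dyadicPoint ht m) (dyadicPoint_zero t m).ge (2 ^ m) x
  have hlower : ∀ δ > 0,
      P {ω | x < B t ω - B 0 ω} + P {ω | x + 2 * δ < B t ω - B 0 ω} ≤ L := by
    intro δ hδ
    have hlim := tendsto_const_nhds (x := L) |>.add <|
      ENNReal.Tendsto.const_mul (a := 2) (hB.tendsto_measure_exists_lt_abs_sub ht hδ)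
        (Or.inr ENNReal.ofNat_ne_top)
    rw [mul_zero, add_zero] at hlim
    refine ge_of_tendsto' hlim fun m => ?_
    have h := hB.measure_lt_sub_add_le (monotone_dyadicPoint ht m) (dyadicPoint_zero t m).ge
      (2 ^ m) hx hδ.le
    simp only [dyadicPoint_zero, dyadicPoint_two_pow] at h
    exact h.trans (add_le_add (le_iSup_of_le m le_rfl) le_rfl)
  rw [two_mul]
  refine le_of_tendsto' (tendsto_const_nhds.add (tendsto_measure_add_one_div_lt _ x)) fun j => ?_
  simpa [mul_div_cancel₀] using hlower (1 / (j + 1) / 2) (by positivity)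

lemma IsStdBM.measure_setOf_sub_zero (hB : IsStdBM P B) (p : ℝ → Prop) (t : ℝ) :
    P {ω | p (B t ω - B 0 ω)} = P {ω | p (B t ω)} := by
  refine measure_congr (eventuallyEq_set.2 ?_)
  filter_upwards [hB.init] with ω h0
  simp [h0]

end BrownianMotion

/-- Reflection principle: for a standard Brownian motion `B`, every `t ≥ 0` and `x > 0`,
`P(inf_{0≤s≤t} B(s) < -x) = P(sup_{0≤s≤t} B(s) > x) = 2 P(B(t) > x)`. -/
theorem reflection_principle (P : Measure Ω) [IsProbabilityMeasure P]
    (B : ℝ → Ω → ℝ) (hB : IsStdBM P B) (t : ℝ) (ht : 0 ≤ t) (x : ℝ) (hx : 0 < x) :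
    P {ω | (⨅ s : Set.Icc (0 : ℝ) t, B s ω) < -x}
      = P {ω | x < (⨆ s : Set.Icc (0 : ℝ) t, B s ω)} ∧
    P {ω | x < (⨆ s : Set.Icc (0 : ℝ) t, B s ω)} = 2 * P {ω | x < B t ω} := by
  have hsup : P {ω | x < ⨆ s : Set.Icc (0 : ℝ) t, B s ω} = 2 * P {ω | x < B t ω} := by
    rw [hB.measure_lt_iSup_Icc ht hx.le, hB.measure_setOf_sub_zero (x < ·)]
  have hinf : {ω | (⨅ s : Set.Icc (0 : ℝ) t, B s ω) < -x}
      = {ω | x < ⨆ s : Set.Icc (0 : ℝ) t, -B s ω} := by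
    ext ω
    simp only [Set.mem_ofPred_eq, Real.iInf_eq_neg_iSup_neg, neg_lt_neg_iff]
  have hsymm : P {ω | x < -B t ω - -B 0 ω} = P {ω | x < B t ω - B 0 ω} := by
    simp_rw [neg_sub_neg, ← neg_sub (B t _), lt_neg]
    exact measure_lt_neg_eq_measure_gt ((hB.meas t).sub (hB.meas 0)) (hB.map_neg_sub le_rfl ht) x
  refine ⟨?_, hsup⟩
  rw [hinf, hB.neg.measure_lt_iSup_Icc ht hx.le, hsymm, hB.measure_setOf_sub_zero (x < ·), hsup]
end

section
/- Let X and Y be independent random variables with distributions F_X and F_Y, where Y is nonnegative and not degenerate at 0. Then the following are equivalent: (i) the distribution of X - Y is long-tailed; (ii) F_X is long-tailed; (iii) P(X - Y > x) ∼ P(X > x) as x → ∞. -/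
open MeasureTheory Filter ProbabilityTheory Topology

/-- `μ` is long-tailed: positive tail and `(1 - F(x - t))/(1 - F(x)) → 1` for all `t > 0`. -/
def LongTailed (μ : Measure ℝ) : Prop :=
  (∀ x, 0 < mtail μ x) ∧
  ∀ t : ℝ, 0 < t → Tendsto (fun x => mtail μ (x - t) / mtail μ x) atTop (nhds 1)

/-!
Write `G`, `H` for the tails of `X` and `X - Y` and `c` for the distribution function of `Y`.
Independence and `Y ≥ 0` give `G (x + t) * c t ≤ H x ≤ G x`, and `c t → 1`, so `H / G → 1`
as soon as `G` or `H` is long-tailed; and then `H` inherits long-tailedness from `G` through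
`H (x - t) / H x = (H / G) (x - t) * G (x - t) / G x * (G / H) x`.
Conversely, choose `δ > 0` with `c δ < 1` (possible as `Y` is not degenerate at `0`).
Splitting on `Y > δ` gives `H x ≤ (1 - c δ) * G (x + δ) + c δ * G x`, so `H ∼ G` forces
`G (x + δ) ∼ G x`, and a single shift `δ` suffices for long-tailedness since `G` is monotone.
-/

lemma tendsto_nhds_one_of_le_one_of_forall_lt {α : Type*} {l : Filter α} {f : α → ℝ}
    (hle : ∀ᶠ x in l, f x ≤ 1)
    (hlow : ∀ a < 1, ∃ b, a < b ∧
      ∃ g : α → ℝ, Tendsto g l (𝓝 b) ∧ ∀ᶠ x in l, g x ≤ f x) :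
    Tendsto f l (𝓝 1) := by
  refine tendsto_order.2 ⟨fun a ha => ?_, fun b hb => hle.mono fun x hx => hx.trans_lt hb⟩
  obtain ⟨b, hab, g, hg, hgf⟩ := hlow a ha
  filter_upwards [hg.eventually (lt_mem_nhds hab), hgf] with x hgx hfx
  exact hgx.trans_le hfx

lemma Antitone.forall_lt_of_eventually_lt {α β : Type*} [SemilatticeSup α] [Nonempty α]
    [Preorder β] {f : α → β} {b : β} (hf : Antitone f) (h : ∀ᶠ x in atTop, b < f x)
    (x : α) : b < f x := by
  obtain ⟨y, hy, hxy⟩ := (h.and (eventually_ge_atTop x)).exists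
  exact hy.trans_le (hf hxy)

lemma tendsto_sub_const_atTop (t : ℝ) : Tendsto (fun x : ℝ => x - t) atTop atTop :=
  (tendsto_atTop_add_const_right atTop (-t) tendsto_id).congr fun x =>
    (sub_eq_add_neg x t).symm

section Tail

variable {μ : Measure ℝ}

lemma mtail_nonneg (μ : Measure ℝ) (x : ℝ) : 0 ≤ mtail μ x := ENNReal.toReal_nonneg

lemma antitone_mtail [IsFiniteMeasure μ] : Antitone (mtail μ) :=
  fun _ _ h => measureReal_mono (Set.Ioi_subset_Ioi h)

lemma LongTailed.tendsto_div_sub (h : LongTailed μ) {t : ℝ} (ht : 0 < t) :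
    Tendsto (fun x => mtail μ x / mtail μ (x - t)) atTop (𝓝 1) := by
  simpa using (h.2 t ht).inv₀ one_ne_zero

lemma LongTailed.tendsto_add_div (h : LongTailed μ) {t : ℝ} (ht : 0 < t) :
    Tendsto (fun x => mtail μ (x + t) / mtail μ x) atTop (𝓝 1) := by
  simpa [Function.comp_def] using
    (h.tendsto_div_sub ht).comp (tendsto_atTop_add_const_right atTop t tendsto_id)

lemma LongTailed.of_tendsto [IsFiniteMeasure μ] (hpos : ∀ x, 0 < mtail μ x) {δ : ℝ}
    (hδ : 0 < δ) (h : Tendsto (fun x => mtail μ (x - δ) / mtail μ x) atTop (𝓝 1)) :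
    LongTailed μ := by
  have hmul : ∀ n : ℕ,
      Tendsto (fun x => mtail μ (x - n * δ) / mtail μ x) atTop (𝓝 1) := by
    intro n
    induction n with
    | zero => simpa using tendsto_const_nhds.congr fun x => (div_self (hpos x).ne').symm
    | succ n ih =>
      have hprod := (ih.comp (tendsto_sub_const_atTop δ)).mul h
      rw [mul_one] at hprod
      refine hprod.congr fun x => ?_
      rw [Function.comp_apply, div_mul_div_cancel₀ (hpos (x - δ)).ne']
      push_cast
      ring_nf
  refine ⟨hpos, fun t ht => ?_⟩
  obtain ⟨n, hn⟩ := exists_nat_ge (t / δ)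
  refine tendsto_of_tendsto_of_tendsto_of_le_of_le tendsto_const_nhds (hmul n)
    (fun x => (one_le_div (hpos x)).2 (antitone_mtail (by linarith)))
    (fun x => div_le_div_of_nonneg_right (antitone_mtail ?_) (mtail_nonneg μ x))
  rw [div_le_iff₀ hδ] at hn
  linarith

end Tail

section Comparison

variable {μ ν : Measure ℝ} {c : ℝ → ℝ}

lemma forall_mtail_pos_of_tendsto_div [IsFiniteMeasure μ] [IsFiniteMeasure ν]
    (h : Tendsto (fun x => mtail ν x / mtail μ x) atTop (𝓝 1)) :
    (∀ x, 0 < mtail ν x) ∧ ∀ x, 0 < mtail μ x := by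
  have hpos : ∀ᶠ x in atTop, 0 < mtail ν x ∧ 0 < mtail μ x :=
    (h.eventually (lt_mem_nhds one_pos)).mono fun x hx =>
      (div_pos_iff.1 hx).resolve_right fun hneg => (mtail_nonneg ν x).not_gt hneg.1
  exact ⟨antitone_mtail.forall_lt_of_eventually_lt (hpos.mono fun _ => And.left),
    antitone_mtail.forall_lt_of_eventually_lt (hpos.mono fun _ => And.right)⟩

lemma longTailed_of_tendsto_mtail_div [IsFiniteMeasure μ] [IsFiniteMeasure ν] {δ p : ℝ}
    (hδ : 0 < δ) (hp : p < 1)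
    (hsplit : ∀ x, mtail ν x ≤ mtail μ (x + δ) * (1 - p) + mtail μ x * p)
    (h : Tendsto (fun x => mtail ν x / mtail μ x) atTop (𝓝 1)) :
    LongTailed μ := by
  obtain ⟨-, hμ⟩ := forall_mtail_pos_of_tendsto_div h
  have hp' : 0 < 1 - p := sub_pos.2 hp
  have hadd : Tendsto (fun x => mtail μ (x + δ) / mtail μ x) atTop (𝓝 1) := by
    have hlow : Tendsto (fun x => (mtail ν x / mtail μ x - p) / (1 - p)) atTop (𝓝 1) := by
      simpa [div_self hp'.ne'] using (h.sub_const p).div_const (1 - p)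
    refine tendsto_of_tendsto_of_tendsto_of_le_of_le hlow tendsto_const_nhds (fun x => ?_)
      (fun x => div_le_one_of_le₀ (antitone_mtail (by linarith)) (mtail_nonneg μ x))
    rw [div_le_div_iff₀ hp' (hμ x), sub_mul, div_mul_cancel₀ _ (hμ x).ne']
    linarith [hsplit x]
  refine LongTailed.of_tendsto hμ hδ ?_
  simpa [Function.comp_def] using (hadd.comp (tendsto_sub_const_atTop δ)).inv₀ one_ne_zero

/-- Modelled on `μ`, `ν` the laws of `X` and `X - Y` and `c` the distribution function of `Y`,
for `Y ≥ 0` independent of `X`. -/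
structure TailSandwich (μ ν : Measure ℝ) (c : ℝ → ℝ) : Prop where
  mtail_le : ∀ x, mtail ν x ≤ mtail μ x
  mtail_mul_le : ∀ t x, mtail μ x * c t ≤ mtail ν (x - t)
  tendsto_atTop : Tendsto c atTop (𝓝 1)

namespace TailSandwich

lemma tendsto_div_of_forall_mul_le (hs : TailSandwich μ ν c)
    (h : ∀ t > 0, ∃ r : ℝ → ℝ, Tendsto r atTop (𝓝 1) ∧
      ∀ x, c t * r x ≤ mtail ν x / mtail μ x) :
    Tendsto (fun x => mtail ν x / mtail μ x) atTop (𝓝 1) := by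
  refine tendsto_nhds_one_of_le_one_of_forall_lt (Eventually.of_forall fun x =>
    div_le_one_of_le₀ (hs.mtail_le x) (mtail_nonneg μ x)) fun a ha => ?_
  obtain ⟨t, hat, ht⟩ :=
    ((hs.tendsto_atTop.eventually (lt_mem_nhds ha)).and (eventually_gt_atTop 0)).exists
  obtain ⟨r, hr, hrle⟩ := h t ht
  exact ⟨c t, hat, fun x => c t * r x, by simpa using hr.const_mul (c t), .of_forall hrle⟩

lemma tendsto_div_of_longTailed_left (hs : TailSandwich μ ν c) (hμ : LongTailed μ) :
    Tendsto (fun x => mtail ν x / mtail μ x) atTop (𝓝 1) := by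
  refine hs.tendsto_div_of_forall_mul_le fun t ht => ⟨_, hμ.tendsto_add_div ht, fun x => ?_⟩
  rw [mul_div_assoc', div_le_div_iff_of_pos_right (hμ.1 x), mul_comm]
  simpa using hs.mtail_mul_le t (x + t)

lemma tendsto_div_of_longTailed_right (hs : TailSandwich μ ν c) (hν : LongTailed ν) :
    Tendsto (fun x => mtail ν x / mtail μ x) atTop (𝓝 1) := by
  refine hs.tendsto_div_of_forall_mul_le fun t ht => ⟨_, hν.tendsto_div_sub ht, fun x => ?_⟩
  rw [mul_div_assoc', div_le_div_iff₀ (hν.1 (x - t)) ((hν.1 x).trans_le (hs.mtail_le x))]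
  calc c t * mtail ν x * mtail μ x = mtail ν x * (mtail μ x * c t) := by ring
    _ ≤ mtail ν x * mtail ν (x - t) :=
      mul_le_mul_of_nonneg_left (hs.mtail_mul_le t x) (mtail_nonneg ν x)

lemma longTailed_right [IsFiniteMeasure μ] [IsFiniteMeasure ν] (hs : TailSandwich μ ν c)
    (hμ : LongTailed μ) : LongTailed ν := by
  have hr := hs.tendsto_div_of_longTailed_left hμ
  obtain ⟨hνpos, hμpos⟩ := forall_mtail_pos_of_tendsto_div hr
  refine ⟨hνpos, fun t ht => ?_⟩
  have hprod := ((hr.comp (tendsto_sub_const_atTop t)).mul (hμ.2 t ht)).mul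
    (hr.inv₀ one_ne_zero)
  simp only [mul_one, inv_one] at hprod
  refine hprod.congr fun x => ?_
  simp only [Function.comp_apply]
  field_simp [(hμpos (x - t)).ne', (hμpos x).ne', (hνpos x).ne']

end TailSandwich

theorem TailSandwich.longTailed_iff [IsFiniteMeasure μ] [IsFiniteMeasure ν] {δ p : ℝ}
    (hs : TailSandwich μ ν c) (hδ : 0 < δ) (hp : p < 1)
    (hsplit : ∀ x, mtail ν x ≤ mtail μ (x + δ) * (1 - p) + mtail μ x * p) :
    (LongTailed ν ↔ LongTailed μ) ∧
      (LongTailed μ ↔ Tendsto (fun x => mtail ν x / mtail μ x) atTop (𝓝 1)) :=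
  have hratio := longTailed_of_tendsto_mtail_div hδ hp hsplit
  ⟨⟨fun hν => hratio (hs.tendsto_div_of_longTailed_right hν), hs.longTailed_right⟩,
    ⟨hs.tendsto_div_of_longTailed_left, hratio⟩⟩

end Comparison

section Shift

variable {Ω : Type*} [MeasurableSpace Ω] {P : Measure Ω} {X Y : Ω → ℝ}

lemma mtail_map (hX : Measurable X) (x : ℝ) : mtail (P.map X) x = P.real (X ⁻¹' Set.Ioi x) :=
  map_measureReal_apply hX measurableSet_Ioi

lemma ProbabilityTheory.IndepFun.measureReal_inter_preimage_eq_mul (hXY : IndepFun X Y P)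
    {s t : Set ℝ} (hs : MeasurableSet s) (ht : MeasurableSet t) :
    P.real (X ⁻¹' s ∩ Y ⁻¹' t) = P.real (X ⁻¹' s) * P.real (Y ⁻¹' t) := by
  rw [measureReal_def, hXY.measure_inter_preimage_eq_mul s t hs ht, ENNReal.toReal_mul]
  rfl

variable [IsProbabilityMeasure P]

lemma cdf_map (hY : Measurable Y) (t : ℝ) :
    cdf (P.map Y) t = P.real (Y ⁻¹' Set.Iic t) := by
  have := Measure.isProbabilityMeasure_map (μ := P) hY.aemeasurable
  rw [cdf_eq_real, map_measureReal_apply hY measurableSet_Iic]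

lemma one_sub_cdf_map (hY : Measurable Y) (t : ℝ) :
    1 - cdf (P.map Y) t = P.real (Y ⁻¹' Set.Ioi t) := by
  rw [cdf_map hY, ← probReal_compl_eq_one_sub (hY measurableSet_Iic), ← Set.preimage_compl,
    Set.compl_Iic]

lemma exists_pos_cdf_map_lt_one (hY : Measurable Y) (hY0 : 0 < P {ω | 0 < Y ω}) :
    ∃ δ > 0, cdf (P.map Y) δ < 1 := by
  have h0 : cdf (P.map Y) 0 < 1 := by
    have : 0 < P.real (Y ⁻¹' Set.Ioi 0) := ENNReal.toReal_pos hY0.ne' (measure_ne_top _ _)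
    linarith [one_sub_cdf_map (P := P) hY 0]
  have hnear : ∀ᶠ δ in 𝓝[>] 0, cdf (P.map Y) δ < 1 :=
    nhdsWithin_mono _ Set.Ioi_subset_Ici_self
      (((cdf (P.map Y)).right_continuous 0).eventually (gt_mem_nhds h0))
  obtain ⟨δ, hδ, hδ0⟩ := (hnear.and self_mem_nhdsWithin).exists
  exact ⟨δ, hδ0, hδ⟩

lemma tailSandwich_map_sub (hX : Measurable X) (hY : Measurable Y) (hXY : IndepFun X Y P)
    (hY0 : ∀ᵐ ω ∂P, 0 ≤ Y ω) :
    TailSandwich (P.map X) (P.map fun ω => X ω - Y ω) (cdf (P.map Y)) where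
  mtail_le x := by
    rw [mtail_map hX, mtail_map (X := fun ω => X ω - Y ω) (hX.sub hY)]
    refine ENNReal.toReal_mono (measure_ne_top _ _) (measure_mono_ae ?_)
    filter_upwards [hY0] with ω hω (h : x < X ω - Y ω)
    show x < X ω
    linarith
  mtail_mul_le t x := by
    rw [mtail_map hX, cdf_map hY, ← hXY.measureReal_inter_preimage_eq_mul measurableSet_Ioi
      measurableSet_Iic, mtail_map (X := fun ω => X ω - Y ω) (hX.sub hY)]
    refine measureReal_mono fun ω ⟨(hx : x < X ω), (ht : Y ω ≤ t)⟩ => ?_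
    show x - t < X ω - Y ω
    linarith
  tendsto_atTop := tendsto_cdf_atTop _

lemma mtail_map_sub_le (hX : Measurable X) (hY : Measurable Y) (hXY : IndepFun X Y P)
    (hY0 : ∀ᵐ ω ∂P, 0 ≤ Y ω) (δ x : ℝ) :
    mtail (P.map fun ω => X ω - Y ω) x ≤
      mtail (P.map X) (x + δ) * (1 - cdf (P.map Y) δ) +
        mtail (P.map X) x * cdf (P.map Y) δ := by
  rw [one_sub_cdf_map hY, cdf_map hY, mtail_map hX, mtail_map hX,
    ← hXY.measureReal_inter_preimage_eq_mul measurableSet_Ioi measurableSet_Ioi,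
    ← hXY.measureReal_inter_preimage_eq_mul measurableSet_Ioi measurableSet_Iic,
    mtail_map (X := fun ω => X ω - Y ω) (hX.sub hY)]
  refine (ENNReal.toReal_mono (measure_ne_top _ _) (measure_mono_ae ?_)).trans
    (measureReal_union_le _ _)
  filter_upwards [hY0] with ω hω (h : x < X ω - Y ω)
  rcases lt_or_ge δ (Y ω) with hδ | hδ
  · exact Or.inl ⟨show x + δ < X ω by linarith, hδ⟩
  · exact Or.inr ⟨show x < X ω by linarith, hδ⟩

end Shift

/-- Tang (2004): for `X`, `Y` independent with `Y` nonnegative and not degenerate at `0`,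
the distribution of `X - Y` is long-tailed iff the distribution of `X` is long-tailed iff
`P(X - Y > x) ∼ P(X > x)`. -/
theorem longtailed_shift_equiv {Ω : Type*} [MeasurableSpace Ω] (P : Measure Ω)
    [IsProbabilityMeasure P] (X Y : Ω → ℝ)
    (hXm : Measurable X) (hYm : Measurable Y)
    (hindep : IndepFun X Y P)
    (hYpos : ∀ᵐ ω ∂P, 0 ≤ Y ω)
    (hYnd : 0 < P {ω | 0 < Y ω}) :
    (LongTailed (P.map (fun ω => X ω - Y ω)) ↔ LongTailed (P.map X)) ∧
    (LongTailed (P.map X) ↔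
      Tendsto (fun x => (P {ω | x < X ω - Y ω}).toReal / (P {ω | x < X ω}).toReal)
        atTop (nhds 1)) := by
  obtain ⟨δ, hδ, hcδ⟩ := exists_pos_cdf_map_lt_one hYm hYnd
  have key := (tailSandwich_map_sub hXm hYm hindep hYpos).longTailed_iff hδ hcδ
    (mtail_map_sub_le hXm hYm hindep hYpos δ)
  simp only [mtail_map hXm, mtail_map (X := fun ω => X ω - Y ω) (hXm.sub hYm)] at key
  exact key
end
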